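/- arXiv:2408.01898 — 3 statements merged into one kernel-verified Lean document; each statement's English description precedes it below -/
import Mathlib

section
/- For any $s > 0$, the unique $w > 0$ satisfying $w(w+3)^2 = s^2$ is given by $w = 4\sinh^2\left(\frac{1}{6}\operatorname{arcosh}\left(1 + \frac{s^2}{2}\right)\right)$. -/
open Real

noncomputable def arcosh (x : ℝ) : ℝ := Real.log (x + Real.sqrt (x ^ 2 - 1))

/-! With `w = 4 sinh² u` one has `cosh 2u = 1 + w/2`, and the triple-angle formula turns
`cosh 6u = 4 cosh³ 2u - 3 cosh 2u` into `cosh 6u = 1 + w (w+3)² / 2`. Hence `u = arcosh(1 + s²/2) / 6`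
gives a positive solution of `w (w+3)² = s²`, and it is the only one because
`w ↦ w (w+3)²` is strictly increasing on `[0, ∞)`. -/

lemma arcosh_eq_real_arcosh : _root_.arcosh = Real.arcosh := rfl

lemma cosh_six_mul_eq (u : ℝ) :
    cosh (6 * u) = 1 + 4 * sinh u ^ 2 * (4 * sinh u ^ 2 + 3) ^ 2 / 2 := by
  rw [show 6 * u = 3 * (2 * u) by ring, cosh_three_mul, cosh_two_mul, cosh_sq u]
  ring

lemma strictMonoOn_mul_add_three_sq :
    StrictMonoOn (fun w : ℝ => w * (w + 3) ^ 2) (Set.Ici 0) := by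
  intro v hv w hw hvw
  simp only [Set.mem_Ici] at hv hw
  calc v * (v + 3) ^ 2 ≤ v * (w + 3) ^ 2 := by gcongr
    _ < w * (w + 3) ^ 2 := by gcongr

/-- For any `s > 0`, the unique `w > 0` with `w (w+3)² = s²` is
`w = 4 sinh²(arcosh(1 + s²/2)/6)`. -/
theorem stmt1 (s : ℝ) (hs : 0 < s) :
    ∀ w : ℝ, (0 < w ∧ w * (w + 3) ^ 2 = s ^ 2) ↔
      w = 4 * Real.sinh ((1 / 6) * _root_.arcosh (1 + s ^ 2 / 2)) ^ 2 := by
  intro w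
  rw [arcosh_eq_real_arcosh]
  set u := (1 / 6) * Real.arcosh (1 + s ^ 2 / 2)
  have hx : 1 < 1 + s ^ 2 / 2 := by linarith [pow_pos hs 2]
  have hu : 0 < u := by have := Real.arcosh_pos hx; positivity
  have hw₀ : 0 < 4 * sinh u ^ 2 := by have := sinh_pos_iff.mpr hu; positivity
  have hsol : 4 * sinh u ^ 2 * (4 * sinh u ^ 2 + 3) ^ 2 = s ^ 2 := by
    have h := cosh_six_mul_eq u
    rw [show 6 * u = Real.arcosh (1 + s ^ 2 / 2) by ring, Real.cosh_arcosh hx.le] at h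
    linarith
  constructor
  · rintro ⟨hw, hweq⟩
    exact strictMonoOn_mul_add_three_sq.injOn hw.le hw₀.le (hweq.trans hsol.symm)
  · rintro rfl
    exact ⟨hw₀, hsol⟩
end

section
/- Given mean $\mu > 0$, coefficient of variation $v > 0$, and skewness $s > 0$ such that $\lambda := v / \left(2\sinh\left(\frac{1}{6}\operatorname{arcosh}(1 + s^2/2)\right)\right)$ satisfies $0 < \lambda \le 1$, the shifted lognormal distribution with parameters $\sigma = \sqrt{\ln(1+w)}$, $w = 4\sinh^2\left(\frac{1}{6}\operatorname{arcosh}(1+s^2/2)\right)$, and this $\lambda$ has mean $\mu$, coefficient of variation $v$, and skewness $s$. -/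
/-!
Put `u = arcosh (1 + s² / 2)`. Since `cosh u = 1 + 2 sinh² (u / 2)`, we get `u = 2 arsinh (s / 2)`,
and the triple-angle formula `sinh (3t) = 4 sinh³ t + 3 sinh t` shows that `a = 2 sinh (u / 6)` is
the real root of the depressed cubic `a³ + 3a = s`. As `w = a²` and `e^{σ²} - 1 = w`, the skewness
`√w (w + 3) = a³ + 3a` equals `s`, and `λ √w = λ a = v` by the choice of `λ`.
-/

open Real

noncomputable def depressedCubicRoot (s : ℝ) : ℝ := 2 * sinh (arsinh (s / 2) / 3)

theorem depressedCubicRoot_pow_three_add (s : ℝ) :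
    depressedCubicRoot s ^ 3 + 3 * depressedCubicRoot s = s := by
  have h := sinh_three_mul (arsinh (s / 2) / 3)
  rw [mul_div_cancel₀ _ three_ne_zero, sinh_arsinh] at h
  rw [depressedCubicRoot]
  linear_combination -2 * h

theorem depressedCubicRoot_pos {s : ℝ} (hs : 0 < s) : 0 < depressedCubicRoot s := by
  unfold depressedCubicRoot
  have : 0 < arsinh (s / 2) := arsinh_pos_iff.mpr (by positivity)
  have : 0 < sinh (arsinh (s / 2) / 3) := sinh_pos_iff.mpr (by positivity)
  positivity

theorem arcosh_one_add_sq_div_two {s : ℝ} (hs : 0 ≤ s) :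
    _root_.arcosh (1 + s ^ 2 / 2) = 2 * arsinh (s / 2) := by
  have hcosh : cosh (2 * arsinh (s / 2)) = 1 + s ^ 2 / 2 := by
    rw [cosh_two_mul, cosh_sq, sinh_arsinh]
    ring
  rw [← hcosh]
  -- `_root_.arcosh` is definitionally `Real.arcosh`.
  exact Real.arcosh_cosh (mul_nonneg zero_le_two (arsinh_nonneg_iff.mpr (by positivity)))

theorem two_mul_sinh_arcosh_one_add_sq_div_two_div_six {s : ℝ} (hs : 0 ≤ s) :
    2 * sinh ((1 / 6) * _root_.arcosh (1 + s ^ 2 / 2)) = depressedCubicRoot s := by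
  rw [arcosh_one_add_sq_div_two hs, depressedCubicRoot]
  ring_nf

theorem exp_sqrt_log_one_add_sq_sub_one {w : ℝ} (hw : 0 ≤ w) :
    exp (√(log (1 + w)) ^ 2) - 1 = w := by
  rw [sq_sqrt (log_nonneg (by linarith)), exp_log (by linarith)]
  ring

theorem stmt6_general (μ v s : ℝ) (hs : 0 < s)
    (w : ℝ) (hw : w = 4 * Real.sinh ((1 / 6) * _root_.arcosh (1 + s ^ 2 / 2)) ^ 2)
    (σ : ℝ) (hσ : σ = Real.sqrt (Real.log (1 + w)))
    (lam : ℝ) (hlam : lam = v / (2 * Real.sinh ((1 / 6) * _root_.arcosh (1 + s ^ 2 / 2)))) :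
    μ = μ ∧ Real.exp (σ ^ 2) - 1 = w ∧
      lam * Real.sqrt (Real.exp (σ ^ 2) - 1) = v ∧
      Real.sqrt (Real.exp (σ ^ 2) - 1) * ((Real.exp (σ ^ 2) - 1) + 3) = s := by
  have ha := two_mul_sinh_arcosh_one_add_sq_div_two_div_six hs.le
  set a := depressedCubicRoot s
  have ha0 : 0 < a := depressedCubicRoot_pos hs
  have hwa : w = a ^ 2 := by rw [hw, ← ha]; ring
  have hexp : exp (σ ^ 2) - 1 = w := by
    rw [hσ]
    exact exp_sqrt_log_one_add_sq_sub_one (hwa ▸ sq_nonneg a)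
  have hsqrt : √w = a := by rw [hwa, sqrt_sq ha0.le]
  refine ⟨rfl, hexp, ?_, ?_⟩
  · rw [hexp, hsqrt, hlam, ha]
    field_simp
  · rw [hexp, hsqrt, hwa]
    linear_combination depressedCubicRoot_pow_three_add s

/-- Moment matching of the shifted lognormal distribution: given mean `μ > 0`,
coefficient of variation `v > 0` and skewness `s > 0`, the parameters
`w = 4 sinh²(arcosh(1+s²/2)/6)`, `σ = √(ln(1+w))`, `λ = v/(2 sinh(arcosh(1+s²/2)/6))`
(assumed to satisfy `0 < λ ≤ 1`) reproduce mean `μ`, coefficient of variation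
`λ √(e^{σ²}-1) = v`, and skewness `√(e^{σ²}-1)(e^{σ²}-1+3) = s`. -/
theorem stmt6 (μ v s : ℝ) (hμ : 0 < μ) (hv : 0 < v) (hs : 0 < s)
    (w : ℝ) (hw : w = 4 * Real.sinh ((1 / 6) * _root_.arcosh (1 + s ^ 2 / 2)) ^ 2)
    (σ : ℝ) (hσ : σ = Real.sqrt (Real.log (1 + w)))
    (lam : ℝ) (hlam : lam = v / (2 * Real.sinh ((1 / 6) * _root_.arcosh (1 + s ^ 2 / 2))))
    (hlam0 : 0 < lam) (hlam1 : lam ≤ 1) :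
    μ = μ ∧ Real.exp (σ ^ 2) - 1 = w ∧
      lam * Real.sqrt (Real.exp (σ ^ 2) - 1) = v ∧
      Real.sqrt (Real.exp (σ ^ 2) - 1) * ((Real.exp (σ ^ 2) - 1) + 3) = s :=
  stmt6_general μ v s hs w hw σ hσ lam hlam
end

section
/- Let $\lambda > 0$, $\alpha > 0$, let $X$ be a Gamma($\alpha$, scale 1) random variable conditioned on $X < \lambda$, and conditionally on $X$ let $N$ be Poisson with intensity $\lambda - X$. Then for every nonnegative integer $n$, $\mathrm{Prob}(N = n) = \frac{1}{P_{\mathcal{G}}(\lambda;\alpha)} \frac{\lambda^{\alpha+n} e^{-\lambda}}{\Gamma(n+\alpha+1)}$, i.e., $N$ has the shifted Poisson distribution $\mathcal{SP}(\lambda,\alpha)$. -/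
/-!
The exponentials combine to `e^{-λ}`, so the integrand is a constant multiple of the Beta kernel
`t^{α-1} (λ-t)^n`, whose integral over `(0, λ]` is `λ^{α+n} B(α, n+1) = λ^{α+n} Γ(α) n! / Γ(α+n+1)`.
-/

open Real MeasureTheory

/-- Gamma CDF `P_G(x; α)` (unit scale). -/
noncomputable def gammaCdf (x α : ℝ) : ℝ :=
  (∫ t in Set.Ioc (0 : ℝ) x, t ^ (α - 1) * Real.exp (-t)) / Real.Gamma α

theorem integral_rpow_mul_sub_rpow {a b lam : ℝ} (ha : 0 < a) (hb : 0 < b) (hlam : 0 < lam) :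
    ∫ t in 0..lam, t ^ (a - 1) * (lam - t) ^ (b - 1)
      = lam ^ (a + b - 1) * ProbabilityTheory.beta a b := by
  have hbeta : Complex.betaIntegral a b = (ProbabilityTheory.beta a b : ℂ) := by
    rw [Complex.betaIntegral_eq_Gamma_mul_div _ _ (by simpa) (by simpa), ProbabilityTheory.beta,
      ← Complex.ofReal_add, Complex.Gamma_ofReal, Complex.Gamma_ofReal, Complex.Gamma_ofReal]
    push_cast; rfl
  have hscaled := Complex.betaIntegral_scaled a b hlam
  rw [hbeta, show (a : ℂ) + b - 1 = ((a + b - 1 : ℝ) : ℂ) by push_cast; rfl,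
    ← Complex.ofReal_cpow hlam.le, ← Complex.ofReal_mul] at hscaled
  apply Complex.ofReal_injective
  rw [← hscaled, ← intervalIntegral.integral_ofReal]
  refine intervalIntegral.integral_congr fun t ht => ?_
  rw [Set.uIcc_of_le hlam.le] at ht
  push_cast
  rw [Complex.ofReal_cpow ht.1, Complex.ofReal_cpow (sub_nonneg.2 ht.2)]
  push_cast; rfl

theorem setIntegral_Ioc_rpow_mul_sub_pow {a lam : ℝ} (ha : 0 < a) (hlam : 0 < lam) (n : ℕ) :
    ∫ t in Set.Ioc 0 lam, t ^ (a - 1) * (lam - t) ^ n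
      = lam ^ (a + n) * ProbabilityTheory.beta a (n + 1) := by
  rw [← intervalIntegral.integral_of_le hlam.le]
  convert integral_rpow_mul_sub_rpow ha (Nat.cast_add_one_pos n) hlam using 3 with t
  · rw [add_sub_cancel_right, rpow_natCast]
  · ring_nf

/-- Sampling a shifted Poisson variable via a gamma-mixture Poisson: the density
identity `∫_0^λ [t^{α-1} e^{-t} / (Γ(α) P_G(λ;α))] ⋅ [(λ-t)^n e^{-(λ-t)} / n!] dt
= λ^{α+n} e^{-λ} / (P_G(λ;α) Γ(n+α+1))`, i.e. the mixture has the shifted Poisson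
mass function. -/
theorem stmt13 (lam α : ℝ) (hlam : 0 < lam) (hα : 0 < α) (n : ℕ) :
    ∫ t in Set.Ioc (0 : ℝ) lam,
        (t ^ (α - 1) * Real.exp (-t) / (Real.Gamma α * gammaCdf lam α))
          * ((lam - t) ^ n * Real.exp (-(lam - t)) / (Nat.factorial n))
      = (1 / gammaCdf lam α) * (lam ^ (α + n) * Real.exp (-lam) / Real.Gamma (n + α + 1)) := by
  have hintegrand : ∀ t : ℝ,
      t ^ (α - 1) * exp (-t) / (Gamma α * gammaCdf lam α)
          * ((lam - t) ^ n * exp (-(lam - t)) / n.factorial)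
        = (gammaCdf lam α)⁻¹ * (exp (-lam) / (Gamma α * n.factorial)
          * (t ^ (α - 1) * (lam - t) ^ n)) := fun t => by
    rw [show exp (-lam) = exp (-t) * exp (-(lam - t)) by rw [← exp_add]; ring_nf]
    field_simp
  simp_rw [hintegrand]
  rw [integral_const_mul, integral_const_mul, setIntegral_Ioc_rpow_mul_sub_pow hα hlam,
    ProbabilityTheory.beta, Gamma_nat_eq_factorial, one_div]
  congr 1
  have hΓ : Gamma α ≠ 0 := (Gamma_pos_of_pos hα).ne'
  rw [show (n : ℝ) + α + 1 = α + (n + 1) by ring]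
  field_simp
end
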